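/- arXiv:0907.5464 — 2 statements merged into one kernel-verified Lean document; each statement's English description precedes it below -/
import Mathlib

section
/- Let N and K be positive integers, let w_1, …, w_K and h̃ be vectors in ℂ^N, let γ ≥ 0, σ² ≥ 0, δ ≥ 0, fix k ∈ {1, …, K}, and set ε = δ² + 2δ‖h̃‖. If |w_k†h̃|² − γ·Σ_{i≠k} |w_i†h̃|² − ε·( ‖w_k‖² + γ·Σ_{i≠k} ‖w_i‖² ) ≥ σ²γ, then for every h ∈ ℂ^N with ‖h − h̃‖ ≤ δ one has |w_k†h|² ≥ γ·(σ² + Σ_{i≠k} |w_i†h|²); that is, the loosely bounded (LBCS) constraint guarantees the SINR constraint for every channel realization in the uncertainty ball. -/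
open BigOperators Finset

/-- The Euclidean norm of a complex vector. -/
noncomputable def vnorm {N : ℕ} (v : Fin N → ℂ) : ℝ :=
  Real.sqrt (∑ i, ‖v i‖ ^ 2)

/-- The standard inner product `u† v` of two complex vectors. -/
noncomputable def dotc {N : ℕ} (u v : Fin N → ℂ) : ℂ :=
  ∑ i, star (u i) * v i

/-!
The perturbation `e = h - h̃` moves each received amplitude `|wᵢ† h|` by at most `‖wᵢ‖ δ`
(Cauchy–Schwarz), so each received power `|wᵢ† h|²` moves by at most
`‖wᵢ‖ δ (‖wᵢ‖ δ + 2 |wᵢ† h̃|) ≤ ε ‖wᵢ‖²`. Bounding the desired power from below and the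
interference powers from above by these amounts turns the LBCS inequality into the SINR one.
-/

lemma abs_sq_sub_sq_le_of_abs_sub_le {x y d : ℝ} (h : |x - y| ≤ d) :
    |x ^ 2 - y ^ 2| ≤ d * (d + 2 * |y|) := by
  have hd : 0 ≤ d := (abs_nonneg _).trans h
  calc |x ^ 2 - y ^ 2| = |x - y| * |x - y + 2 * y| := by rw [← abs_mul]; ring_nf
    _ ≤ d * (d + 2 * |y|) := by
      gcongr
      calc |x - y + 2 * y| ≤ |x - y| + |2 * y| := abs_add_le _ _
        _ ≤ d + 2 * |y| := by rw [abs_mul, abs_two]; gcongr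

section InnerProductSpace

variable {𝕜 E : Type*} [RCLike 𝕜] [NormedAddCommGroup E] [InnerProductSpace 𝕜 E]

lemma abs_norm_inner_sq_sub_le (u : E) {h h' : E} {δ : ℝ} (hh : ‖h - h'‖ ≤ δ) :
    |‖inner 𝕜 u h‖ ^ 2 - ‖inner 𝕜 u h'‖ ^ 2| ≤ (δ ^ 2 + 2 * δ * ‖h'‖) * ‖u‖ ^ 2 := by
  have hδ : 0 ≤ δ := (norm_nonneg _).trans hh
  have hamp : |‖inner 𝕜 u h‖ - ‖inner 𝕜 u h'‖| ≤ ‖u‖ * δ :=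
    calc |‖inner 𝕜 u h‖ - ‖inner 𝕜 u h'‖| ≤ ‖inner 𝕜 u h - inner 𝕜 u h'‖ :=
          abs_norm_sub_norm_le _ _
      _ = ‖inner 𝕜 u (h - h')‖ := by rw [inner_sub_right]
      _ ≤ ‖u‖ * ‖h - h'‖ := norm_inner_le_norm _ _
      _ ≤ ‖u‖ * δ := by gcongr
  calc |‖inner 𝕜 u h‖ ^ 2 - ‖inner 𝕜 u h'‖ ^ 2|
      ≤ ‖u‖ * δ * (‖u‖ * δ + 2 * |‖inner 𝕜 u h'‖|) :=
        abs_sq_sub_sq_le_of_abs_sub_le hamp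
    _ ≤ ‖u‖ * δ * (‖u‖ * δ + 2 * (‖u‖ * ‖h'‖)) := by
        rw [abs_norm]; gcongr; exact norm_inner_le_norm _ _
    _ = (δ ^ 2 + 2 * δ * ‖h'‖) * ‖u‖ ^ 2 := by ring

end InnerProductSpace

lemma vnorm_eq_norm_toLp {N : ℕ} (v : Fin N → ℂ) : vnorm v = ‖WithLp.toLp 2 v‖ := by
  simp [vnorm, EuclideanSpace.norm_eq]

lemma dotc_eq_inner_toLp {N : ℕ} (u v : Fin N → ℂ) :
    dotc u v = inner ℂ (WithLp.toLp 2 u) (WithLp.toLp 2 v) := by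
  simp [dotc, PiLp.inner_apply, mul_comm]

lemma abs_norm_dotc_sq_sub_le {N : ℕ} (u : Fin N → ℂ) {h h' : Fin N → ℂ} {δ : ℝ}
    (hh : vnorm (h - h') ≤ δ) :
    |‖dotc u h‖ ^ 2 - ‖dotc u h'‖ ^ 2| ≤ (δ ^ 2 + 2 * δ * vnorm h') * vnorm u ^ 2 := by
  simp only [dotc_eq_inner_toLp, vnorm_eq_norm_toLp, WithLp.toLp_sub] at hh ⊢
  exact abs_norm_inner_sq_sub_le _ hh

theorem stmt11_general (N K : ℕ)
    (w : Fin K → Fin N → ℂ) (h' : Fin N → ℂ)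
    (γ : ℝ) (hγ : 0 ≤ γ) (σsq : ℝ) (δ : ℝ)
    (k : Fin K)
    (ε : ℝ) (hε : ε = δ ^ 2 + 2 * δ * vnorm h')
    (hLBCS : ‖dotc (w k) h'‖ ^ 2
        - γ * ∑ i ∈ Finset.univ.erase k, ‖dotc (w i) h'‖ ^ 2
        - ε * (vnorm (w k) ^ 2 + γ * ∑ i ∈ Finset.univ.erase k, vnorm (w i) ^ 2)
        ≥ σsq * γ) :
    ∀ h : Fin N → ℂ, vnorm (h - h') ≤ δ →
      ‖dotc (w k) h‖ ^ 2 ≥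
        γ * (σsq + ∑ i ∈ Finset.univ.erase k, ‖dotc (w i) h‖ ^ 2) := by
  intro h hh
  have hdev (i : Fin K) : |‖dotc (w i) h‖ ^ 2 - ‖dotc (w i) h'‖ ^ 2| ≤ ε * vnorm (w i) ^ 2 :=
    hε ▸ abs_norm_dotc_sq_sub_le (w i) hh
  have hsignal := (abs_le.mp (hdev k)).1
  have hinterference : ∑ i ∈ univ.erase k, ‖dotc (w i) h‖ ^ 2
      ≤ ∑ i ∈ univ.erase k, ‖dotc (w i) h'‖ ^ 2 + ε * ∑ i ∈ univ.erase k, vnorm (w i) ^ 2 := by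
    rw [mul_sum, ← sum_add_distrib]
    exact sum_le_sum fun i _ => by linarith [(abs_le.mp (hdev i)).2]
  linarith [mul_le_mul_of_nonneg_left hinterference hγ]

theorem stmt11 (N K : ℕ) (hN : 0 < N) (hK : 0 < K)
    (w : Fin K → Fin N → ℂ) (h' : Fin N → ℂ)
    (γ : ℝ) (hγ : 0 ≤ γ) (σsq : ℝ) (hσ : 0 ≤ σsq) (δ : ℝ) (hδ : 0 ≤ δ)
    (k : Fin K)
    (ε : ℝ) (hε : ε = δ ^ 2 + 2 * δ * vnorm h')
    (hLBCS : ‖dotc (w k) h'‖ ^ 2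
        - γ * ∑ i ∈ Finset.univ.erase k, ‖dotc (w i) h'‖ ^ 2
        - ε * (vnorm (w k) ^ 2 + γ * ∑ i ∈ Finset.univ.erase k, vnorm (w i) ^ 2)
        ≥ σsq * γ) :
    ∀ h : Fin N → ℂ, vnorm (h - h') ≤ δ →
      ‖dotc (w k) h‖ ^ 2 ≥
        γ * (σsq + ∑ i ∈ Finset.univ.erase k, ‖dotc (w i) h‖ ^ 2) :=
  stmt11_general N K w h' γ hγ σsq δ k ε hε hLBCS
end

section
/- Let N and K be positive integers, let H̃ be a Hermitian N×N complex matrix, let W_1, …, W_K be positive semidefinite Hermitian N×N complex matrices, let γ ≥ 0, ε ≥ 0, σ²γ ∈ ℝ, fix k ∈ {1, …, K}, and set M = W_k − γ·Σ_{i≠k} W_i. If the LBCS constraint Re Tr(H̃M) − ε·( Tr(W_k) + γ·Σ_{i≠k} Tr(W_i) ) ≥ σ²γ holds (where each Tr(W_j) is real since W_j is Hermitian), then the ExCS constraint Re Tr(H̃M) − ε‖M‖_F ≥ σ²γ also holds; that is, every point feasible for the loosely bounded problem is feasible for the exact problem. -/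
open Matrix BigOperators Finset
open scoped ComplexOrder

/-- The Frobenius norm of a complex `N × N` matrix. -/
noncomputable def frob {N : ℕ} (A : Matrix (Fin N) (Fin N) ℂ) : ℝ :=
  Real.sqrt (∑ i, ∑ j, ‖A i j‖ ^ 2)

/-- The real part of the trace of a complex matrix. -/
noncomputable def reTr {N : ℕ} (A : Matrix (Fin N) (Fin N) ℂ) : ℝ :=
  (Matrix.trace A).re

/-! Writing a positive semidefinite `A` as `Bᴴ * B`, submultiplicativity of the Frobenius norm
gives `‖A‖_F ≤ ‖B‖_F ^ 2 = Re Tr A`. By the triangle inequality `‖M‖_F` is therefore at most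
`Tr W_k + γ Σ_{i ≠ k} Tr W_i`, and multiplying by `ε ≥ 0` compares the two constraints. -/

attribute [local instance] Matrix.frobeniusNormedAddCommGroup Matrix.frobeniusNormedSpace

variable {m n 𝕜 : Type*} [Fintype m] [Fintype n] [RCLike 𝕜]

open scoped MatrixOrder Matrix.Norms.L2Operator in
lemma Matrix.PosSemidef.exists_eq_conjTranspose_mul_self {A : Matrix n n 𝕜}
    (hA : A.PosSemidef) : ∃ B : Matrix n n 𝕜, A = Bᴴ * B := by
  classical
  exact CStarAlgebra.nonneg_iff_eq_star_mul_self.mp hA.nonneg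

lemma Matrix.re_trace_conjTranspose_mul_self (B : Matrix m n 𝕜) :
    RCLike.re (Bᴴ * B).trace = ‖B‖ ^ 2 := by
  simp only [frobenius_norm_def, Real.rpow_two, ← Real.sqrt_eq_rpow]
  rw [Real.sq_sqrt (by positivity)]
  simp only [trace, diag, mul_apply, conjTranspose_apply, map_sum, RCLike.star_def,
    RCLike.conj_mul, ← RCLike.ofReal_pow, RCLike.ofReal_re]
  exact Finset.sum_comm

lemma Matrix.PosSemidef.frobenius_norm_le_re_trace {A : Matrix n n 𝕜} (hA : A.PosSemidef) :
    ‖A‖ ≤ RCLike.re A.trace := by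
  obtain ⟨B, rfl⟩ := hA.exists_eq_conjTranspose_mul_self
  calc ‖Bᴴ * B‖ ≤ ‖Bᴴ‖ * ‖B‖ := frobenius_norm_mul _ _
    _ = RCLike.re (Bᴴ * B).trace := by
      rw [frobenius_norm_conjTranspose, re_trace_conjTranspose_mul_self, sq]

lemma frob_eq_norm {N : ℕ} (A : Matrix (Fin N) (Fin N) ℂ) : frob A = ‖A‖ := by
  rw [frobenius_norm_def, frob, Real.sqrt_eq_rpow]
  norm_num

theorem stmt14_general (N K : ℕ)
    (H : Matrix (Fin N) (Fin N) ℂ)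
    (W : Fin K → Matrix (Fin N) (Fin N) ℂ) (hW : ∀ i, (W i).PosSemidef)
    (γ : ℝ) (hγ : 0 ≤ γ) (ε : ℝ) (hε : 0 ≤ ε) (t : ℝ)
    (k : Fin K)
    (M : Matrix (Fin N) (Fin N) ℂ)
    (hM : M = W k - γ • ∑ i ∈ Finset.univ.erase k, W i)
    (hLBCS : reTr (H * M)
        - ε * ((Matrix.trace (W k)).re +
            γ * ∑ i ∈ Finset.univ.erase k, (Matrix.trace (W i)).re)
        ≥ t) :
    reTr (H * M) - ε * frob M ≥ t := by
  set S := ∑ i ∈ Finset.univ.erase k, W i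
  have hS : S.PosSemidef := posSemidef_sum _ fun i _ => hW i
  have hM_le : frob M ≤ (W k).trace.re + γ * ∑ i ∈ Finset.univ.erase k, (W i).trace.re :=
    calc frob M = ‖W k - γ • S‖ := by rw [frob_eq_norm, hM]
      _ ≤ ‖W k‖ + ‖γ • S‖ := norm_sub_le _ _
      _ = ‖W k‖ + γ * ‖S‖ := by rw [norm_smul, Real.norm_of_nonneg hγ]
      _ ≤ (W k).trace.re + γ * S.trace.re := by
          gcongr
          exacts [(hW k).frobenius_norm_le_re_trace, hS.frobenius_norm_le_re_trace]
      _ = _ := by rw [trace_sum, Complex.re_sum]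
  linarith [mul_le_mul_of_nonneg_left hM_le hε]

theorem stmt14 (N K : ℕ) (hN : 0 < N) (hK : 0 < K)
    (H : Matrix (Fin N) (Fin N) ℂ) (hH : H.IsHermitian)
    (W : Fin K → Matrix (Fin N) (Fin N) ℂ) (hW : ∀ i, (W i).PosSemidef)
    (γ : ℝ) (hγ : 0 ≤ γ) (ε : ℝ) (hε : 0 ≤ ε) (t : ℝ)
    (k : Fin K)
    (M : Matrix (Fin N) (Fin N) ℂ)
    (hM : M = W k - γ • ∑ i ∈ Finset.univ.erase k, W i)
    (hLBCS : reTr (H * M)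
        - ε * ((Matrix.trace (W k)).re +
            γ * ∑ i ∈ Finset.univ.erase k, (Matrix.trace (W i)).re)
        ≥ t) :
    reTr (H * M) - ε * frob M ≥ t :=
  stmt14_general N K H W hW γ hγ ε hε t k M hM hLBCS
end
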